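/- Let f be holomorphic on a neighborhood of the closed disc B(z,r) in ℂ, with r > 0 and 1 ≤ p < ∞. Then there is a constant C depending only on p and r such that |f'(z)| ≤ C ((1/|B(z,r)|) ∫_{B(z,r)} |f(w) − f(z)|^p dA(w))^{1/p}. -/

import Mathlib

/-!
The difference quotient `g = dslope f z` is holomorphic with `g z = f' z`, and on the circle of
radius `t` about `z` it has modulus `|f - f z| / t`. The mean value property of `g` therefore
gives `t |f' z| ≤` (circle average of `|f - f z|` at radius `t`). Integrating over `0 < t < r` in
polar coordinates yields `(2π r³ / 3) |f' z| ≤ ∫_{B(z,r)} |f - f z|`, i.e. the estimate with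
`C = 3 / (2r)` for `p = 1`, and Jensen's inequality for `x ↦ x ^ p` passes to every `p ≥ 1`.
-/

open MeasureTheory Metric Real Set

variable {E : Type*} [NormedAddCommGroup E] [NormedSpace ℝ E]

theorem Real.norm_circleAverage_le (f : ℂ → E) (c : ℂ) (R : ℝ) :
    ‖circleAverage f c R‖ ≤ circleAverage (fun z ↦ ‖f z‖) c R := by
  rw [circleAverage_def, circleAverage_def, norm_smul, smul_eq_mul,
    norm_of_nonneg (by positivity)]
  gcongr
  exact intervalIntegral.norm_integral_le_integral_norm (by positivity)

theorem Complex.polarCoord_symm_eq_circleMap (p : ℝ × ℝ) :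
    Complex.polarCoord.symm p = circleMap 0 p.1 p.2 := by
  rw [Complex.polarCoord_symm_apply, circleMap, Complex.exp_mul_I]
  push_cast; ring

theorem integral_ball_zero_eq_intervalIntegral_circleAverage {u : ℂ → E} {r : ℝ} (hr : 0 ≤ r)
    (hu : ContinuousOn u (closedBall 0 r)) :
    ∫ w in ball 0 r, u w = ∫ t in 0..r, (2 * π * t) • circleAverage u 0 t := by
  set F : ℝ × ℝ → E := fun p ↦ p.1 • u (circleMap 0 p.1 p.2)
  have hF : IntegrableOn F (Ioo 0 r ×ˢ Ioo (-π) π) := by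
    refine (ContinuousOn.integrableOn_compact (isCompact_Icc.prod isCompact_Icc) ?_).mono_set
      (prod_mono Ioo_subset_Icc_self Ioo_subset_Icc_self)
    refine continuous_fst.continuousOn.smul (hu.comp (by fun_prop) ?_)
    rintro ⟨t, θ⟩ ⟨⟨ht0, htr⟩, -⟩
    simpa [abs_of_nonneg ht0] using htr
  have htarget : polarCoord.target ∩ Iio r ×ˢ univ = Ioo 0 r ×ˢ Ioo (-π) π := by
    rw [polarCoord_target, prod_inter_prod, Ioi_inter_Iio, inter_univ]
  calc ∫ w in ball 0 r, u w
      = ∫ p in polarCoord.target, p.1 • (ball 0 r).indicator u (Complex.polarCoord.symm p) := by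
        rw [Complex.integral_comp_polarCoord_symm, integral_indicator measurableSet_ball]
    _ = ∫ p in polarCoord.target, (Iio r ×ˢ univ).indicator F p := by
        refine setIntegral_congr_fun polarCoord.open_target.measurableSet fun p hp ↦ ?_
        have hp0 : 0 < p.1 := hp.1
        by_cases hpr : p.1 < r
        · have : Complex.polarCoord.symm p ∈ ball 0 r := by simpa [abs_of_pos hp0] using hpr
          rw [indicator_of_mem this, indicator_of_mem (by simpa using hpr),
            Complex.polarCoord_symm_eq_circleMap]
        · have : Complex.polarCoord.symm p ∉ ball 0 r := by simpa [abs_of_pos hp0] using hpr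
          rw [indicator_of_notMem this, indicator_of_notMem (by simpa using hpr), smul_zero]
    _ = ∫ t in Ioo 0 r, ∫ θ in Ioo (-π) π, F (t, θ) := by
        rw [setIntegral_indicator (measurableSet_Iio.prod MeasurableSet.univ), htarget,
          Measure.volume_eq_prod, setIntegral_prod _ hF]
    _ = ∫ t in Ioo 0 r, (2 * π * t) • circleAverage u 0 t := by
        refine setIntegral_congr_fun measurableSet_Ioo fun t _ ↦ ?_
        rw [integral_smul, ← integral_Ioc_eq_integral_Ioo,
          ← intervalIntegral.integral_of_le (by linarith [pi_pos]),
          circleAverage_eq_integral_add (-π),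
          intervalIntegral.integral_comp_add_right (fun θ ↦ u (circleMap 0 t θ)), smul_smul,
          zero_add, show 2 * π + -π = π by ring]
        congr 1
        field_simp
    _ = ∫ t in 0..r, (2 * π * t) • circleAverage u 0 t := by
        rw [intervalIntegral.integral_of_le hr, integral_Ioc_eq_integral_Ioo]

theorem integral_ball_eq_intervalIntegral_circleAverage {u : ℂ → E} {c : ℂ} {r : ℝ} (hr : 0 ≤ r)
    (hu : ContinuousOn u (closedBall c r)) :
    ∫ w in ball c r, u w = ∫ t in 0..r, (2 * π * t) • circleAverage u c t := by
  have hu₀ : ContinuousOn (fun w ↦ u (w + c)) (closedBall 0 r) :=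
    hu.comp (continuous_add_const c).continuousOn fun w hw ↦ by simpa using hw
  calc ∫ w in ball c r, u w = ∫ w in ball 0 r, u (w + c) := by
        rw [← (measurePreserving_add_right volume c).setIntegral_preimage_emb
          (measurableEmbedding_addRight c), preimage_add_right_ball, sub_self]
    _ = ∫ t in 0..r, (2 * π * t) • circleAverage u c t := by
        simp_rw [integral_ball_zero_eq_intervalIntegral_circleAverage hr hu₀,
          circleAverage_map_add_const]

theorem mul_norm_deriv_le_circleAverage_norm_sub {f : ℂ → ℂ} {z : ℂ} {t : ℝ} (ht : 0 < t)
    (hf : DifferentiableOn ℂ f (closedBall z t)) :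
    t * ‖deriv f z‖ ≤ circleAverage (fun w ↦ ‖f w - f z‖) z t := by
  have hg : DifferentiableOn ℂ (dslope f z) (closedBall z t) :=
    (Complex.differentiableOn_dslope (closedBall_mem_nhds z ht)).2 hf
  have hmean : circleAverage (dslope f z) z t = deriv f z := by
    rw [DiffContOnCl.circleAverage, dslope_same]
    simpa [abs_of_pos ht] using hg.diffContOnCl_ball subset_rfl
  have hsphere : EqOn (fun w ↦ ‖dslope f z w‖) (fun w ↦ t⁻¹ • ‖f w - f z‖) (sphere z |t|) := by
    intro w hw
    rw [mem_sphere, abs_of_pos ht, dist_eq_norm] at hw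
    have hwz : w ≠ z := by rintro rfl; simp at hw; linarith
    simp [dslope_of_ne _ hwz, slope_def_module, hw]
  calc t * ‖deriv f z‖ = t * ‖circleAverage (dslope f z) z t‖ := by rw [hmean]
    _ ≤ t * circleAverage (fun w ↦ ‖dslope f z w‖) z t := by
        gcongr; exact norm_circleAverage_le _ _ _
    _ = circleAverage (fun w ↦ ‖f w - f z‖) z t := by
        rw [circleAverage_congr_sphere hsphere, circleAverage_fun_smul, smul_eq_mul, ← mul_assoc,
          mul_inv_cancel₀ ht.ne', one_mul]

theorem mul_norm_deriv_le_integral_ball_norm_sub {f : ℂ → ℂ} {z : ℂ} {r : ℝ} (hr : 0 ≤ r)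
    (hf : DifferentiableOn ℂ f (closedBall z r)) :
    2 * π * r ^ 3 / 3 * ‖deriv f z‖ ≤ ∫ w in ball z r, ‖f w - f z‖ := by
  have hu : ContinuousOn (fun w ↦ ‖f w - f z‖) (closedBall z r) :=
    (hf.continuousOn.sub continuousOn_const).norm
  have hcircle : ContinuousOn (circleAverage (fun w ↦ ‖f w - f z‖) z) (Icc 0 r) :=
    hu.mono (fun w hw ↦ mem_closedBall_iff_norm.2 hw.2) |>.circleAverage fun _ ht ↦ ht.1
  rw [integral_ball_eq_intervalIntegral_circleAverage hr hu]
  calc 2 * π * r ^ 3 / 3 * ‖deriv f z‖ = ∫ t in 0..r, 2 * π * t * (t * ‖deriv f z‖) := by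
        simp only [show ∀ t : ℝ, 2 * π * t * (t * ‖deriv f z‖) = 2 * π * ‖deriv f z‖ * t ^ 2
          from fun t ↦ by ring, intervalIntegral.integral_const_mul, integral_pow]
        ring
    _ ≤ ∫ t in 0..r, (2 * π * t) • circleAverage (fun w ↦ ‖f w - f z‖) z t := by
        refine intervalIntegral.integral_mono_on hr
          ((by fun_prop : Continuous _).intervalIntegrable _ _)
          (((continuousOn_const.mul continuousOn_id).smul hcircle).intervalIntegrable_of_Icc hr)
          fun t ht ↦ ?_
        rw [smul_eq_mul]
        rcases ht.1.eq_or_lt with rfl | ht0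
        · simp
        · gcongr
          exact mul_norm_deriv_le_circleAverage_norm_sub ht0
            (hf.mono (closedBall_subset_closedBall ht.2))

theorem Complex.setAverage_ball_eq {g : ℂ → ℝ} {z : ℂ} {r : ℝ} (hr : 0 ≤ r) :
    ⨍ w in ball z r, g w = 1 / (π * r ^ 2) * ∫ w in ball z r, g w := by
  rw [setAverage_eq, measureReal_def, Complex.volume_ball, smul_eq_mul, one_div]
  simp [ENNReal.toReal_ofReal hr, mul_comm]

theorem norm_deriv_le_setAverage_norm_sub {f : ℂ → ℂ} {z : ℂ} {r : ℝ} (hr : 0 < r)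
    (hf : DifferentiableOn ℂ f (closedBall z r)) :
    ‖deriv f z‖ ≤ 3 / (2 * r) * ⨍ w in ball z r, ‖f w - f z‖ := by
  have hint := mul_norm_deriv_le_integral_ball_norm_sub hr.le hf
  rw [Complex.setAverage_ball_eq hr.le,
    show 3 / (2 * r) * (1 / (π * r ^ 2) * ∫ w in ball z r, ‖f w - f z‖)
      = (∫ w in ball z r, ‖f w - f z‖) / (2 * π * r ^ 3 / 3) by field_simp,
    le_div_iff₀ (by positivity)]
  linarith

theorem setAverage_le_rpow_setAverage_rpow {α : Type*} [MeasurableSpace α] {μ : Measure α}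
    {s : Set α} {u : α → ℝ} {p : ℝ} (hp : 1 ≤ p) (h0 : μ s ≠ 0) (hs : μ s ≠ ⊤)
    (hu : ∀ᵐ x ∂μ.restrict s, 0 ≤ u x) (hui : IntegrableOn u s μ)
    (hup : IntegrableOn (fun x ↦ u x ^ p) s μ) :
    ⨍ x in s, u x ∂μ ≤ (⨍ x in s, u x ^ p ∂μ) ^ (1 / p) := by
  obtain ⟨havg, hjensen⟩ := (convexOn_rpow hp).set_average_mem_epigraph
    (continuousOn_id.rpow_const fun _ _ ↦ Or.inr (by linarith)) isClosed_Ici h0 hs hu hui hup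
  calc ⨍ x in s, u x ∂μ = ((⨍ x in s, u x ∂μ) ^ p) ^ (1 / p) := by
        rw [← rpow_mul havg, mul_one_div_cancel (by linarith), rpow_one]
    _ ≤ (⨍ x in s, u x ^ p ∂μ) ^ (1 / p) :=
        rpow_le_rpow (rpow_nonneg havg p) hjensen (by positivity)

/-- Luecking's pointwise estimate: |f'(z)| ≤ C ((1/(πr²)) ∫_{B(z,r)} |f − f(z)|^p dA)^{1/p}
with C depending on p and r only, for f holomorphic near the closed disc. -/
theorem stmt6 (p r : ℝ) (hp : 1 ≤ p) (hr : 0 < r) :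
    ∃ C : ℝ, 0 < C ∧ ∀ (z : ℂ) (f : ℂ → ℂ),
      (∃ U : Set ℂ, IsOpen U ∧ Metric.closedBall z r ⊆ U ∧ DifferentiableOn ℂ f U) →
      ‖deriv f z‖ ≤
        C * ((1 / (Real.pi * r ^ 2)) *
          ∫ w in Metric.ball z r, ‖f w - f z‖ ^ p) ^ (1 / p) := by
  refine ⟨3 / (2 * r), by positivity, ?_⟩
  rintro z f ⟨U, -, hsub, hf⟩
  have hu : ContinuousOn (fun w ↦ ‖f w - f z‖) (closedBall z r) :=
    ((hf.mono hsub).continuousOn.sub continuousOn_const).norm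
  have hup : ContinuousOn (fun w ↦ ‖f w - f z‖ ^ p) (closedBall z r) :=
    hu.rpow_const fun _ _ ↦ Or.inr (by linarith)
  have hjensen := setAverage_le_rpow_setAverage_rpow hp (measure_ball_pos volume z hr).ne'
    measure_ball_lt_top.ne (.of_forall fun w ↦ norm_nonneg (f w - f z))
    ((hu.integrableOn_compact (isCompact_closedBall z r)).mono_set ball_subset_closedBall)
    ((hup.integrableOn_compact (isCompact_closedBall z r)).mono_set ball_subset_closedBall)
  rw [← Complex.setAverage_ball_eq hr.le]
  calc ‖deriv f z‖ ≤ 3 / (2 * r) * ⨍ w in ball z r, ‖f w - f z‖ :=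
        norm_deriv_le_setAverage_norm_sub hr (hf.mono hsub)
    _ ≤ _ := mul_le_mul_of_nonneg_left hjensen (by positivity)
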